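/- arXiv:2104.11191 — 3 statements merged into one kernel-verified Lean document; each statement's English description precedes it below -/
import Mathlib

section
/- For all subsplit supports S₁ on taxon set X₁ and S₂ on taxon set X₂ with X = X₁ ∪ X₂, every subsplit s in the mutual subsplit support M(S₁, S₂) satisfies: the restriction s|X₁ is either trivial or belongs to S₁, and the restriction s|X₂ is either trivial or belongs to S₂. -/
open Finset

attribute [local instance] Classical.propDecidable

/-- A subsplit on taxa of type `α`: an unordered pair of finite subsets of taxa. -/
abbrev Subsplit (α : Type*) := Sym2 (Finset α)

/-- A parent-child subsplit pair (PCSP): a pair `(t, s)` of subsplits. -/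
abbrev PCSPair (α : Type*) := Subsplit α × Subsplit α

namespace Subsplit

variable {α : Type*} [DecidableEq α]

/-- The parent clade `U(s)` of a subsplit: the union of its two child clades. -/
def clade (s : Subsplit α) : Finset α :=
  Sym2.lift ⟨fun Y Z => Y ∪ Z, fun _ _ => Finset.union_comm _ _⟩ s

/-- A subsplit is valid when its two child clades are disjoint. -/
def Valid (s : Subsplit α) : Prop :=
  Sym2.lift ⟨fun Y Z => Disjoint Y Z, fun _ _ => propext disjoint_comm⟩ s

/-- A subsplit is nontrivial when both child clades are nonempty. -/
def Nontriv (s : Subsplit α) : Prop :=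
  Sym2.lift ⟨fun Y Z => Y.Nonempty ∧ Z.Nonempty, fun _ _ => propext and_comm⟩ s

/-- Restriction of a subsplit to a taxon subset `B`. -/
def restrict (s : Subsplit α) (B : Finset α) : Subsplit α := Sym2.map (fun Y => Y ∩ B) s

end Subsplit

section Defs

variable {α : Type*} [DecidableEq α]

/-- `τ` is a rooted binary tree topology on the clade `W`. -/
structure IsTopology (W : Finset α) (τ : Finset (Subsplit α)) : Prop where
  two_le : 2 ≤ W.card
  valid : ∀ s ∈ τ, Subsplit.Valid s
  nontriv : ∀ s ∈ τ, Subsplit.Nontriv s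
  root : ∃! s, s ∈ τ ∧ Subsplit.clade s = W
  children : ∀ s ∈ τ, ∀ C ∈ s, 2 ≤ C.card → ∃! s', s' ∈ τ ∧ Subsplit.clade s' = C
  parentEx : ∀ s ∈ τ, Subsplit.clade s = W ∨ ∃ t ∈ τ, Subsplit.clade s ∈ t

/-- Restriction of a topology (set of subsplits) to taxon subset `B`:
restrict every subsplit and keep the nontrivial results. -/
noncomputable def restrictT (τ : Finset (Subsplit α)) (B : Finset α) : Finset (Subsplit α) :=
  (τ.image (fun s => Subsplit.restrict s B)).filter (fun s => Subsplit.Nontriv s)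

/-- A subsplit support on taxon set `X'`: a set of valid nontrivial subsplits on `X'`. -/
def IsSupport (X' : Finset α) (S : Set (Subsplit α)) : Prop :=
  ∀ s ∈ S, Subsplit.Valid s ∧ Subsplit.Nontriv s ∧ Subsplit.clade s ⊆ X'

/-- `S(W)`: members of `S` dividing the clade `W`, together with the trivial subsplit `{W, ∅}`. -/
def supportAt (S : Set (Subsplit α)) (W : Finset α) : Set (Subsplit α) :=
  {s | s ∈ S ∧ Subsplit.clade s = W} ∪ {Sym2.mk W (∅ : Finset α)}

/-- The set `s₁ ⊠ s₂` of the two candidate combinations of two subsplits. -/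
def boxTimes (s₁ s₂ : Subsplit α) : Set (Subsplit α) :=
  {s | ∃ Y₁ Z₁ Y₂ Z₂ : Finset α, s₁ = Sym2.mk Y₁ Z₁ ∧ s₂ = Sym2.mk Y₂ Z₂ ∧
    (s = Sym2.mk (Y₁ ∪ Y₂) (Z₁ ∪ Z₂) ∨ s = Sym2.mk (Y₁ ∪ Z₂) (Z₁ ∪ Y₂))}

/-- Reachable clades in the mutual subsplit support construction. -/
inductive ReachClade (S₁ S₂ : Set (Subsplit α)) (X₁ X₂ : Finset α) : Finset α → Prop
  | root : ReachClade S₁ S₂ X₁ X₂ (X₁ ∪ X₂)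
  | step {W : Finset α} {s₁ s₂ s : Subsplit α} {C : Finset α} :
      ReachClade S₁ S₂ X₁ X₂ W →
      s₁ ∈ supportAt S₁ (W ∩ X₁) → s₂ ∈ supportAt S₂ (W ∩ X₂) →
      s ∈ boxTimes s₁ s₂ → Subsplit.Valid s → Subsplit.Nontriv s →
      C ∈ s → 2 ≤ C.card → ReachClade S₁ S₂ X₁ X₂ C

/-- The mutual subsplit support `M(S₁, S₂)`. -/
def mutualSupport (S₁ S₂ : Set (Subsplit α)) (X₁ X₂ : Finset α) : Set (Subsplit α) :=
  {s | ∃ W s₁ s₂, ReachClade S₁ S₂ X₁ X₂ W ∧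
    s₁ ∈ supportAt S₁ (W ∩ X₁) ∧ s₂ ∈ supportAt S₂ (W ∩ X₂) ∧
    s ∈ boxTimes s₁ s₂ ∧ Subsplit.Valid s ∧ Subsplit.Nontriv s}

/-- `(t, s)` is a PCSP on taxon set `X`: `s` is a valid nontrivial subsplit, and `t` is a
subsplit (or the root placeholder `⟨X, ∅⟩`) on `X` having `U(s)` as a child clade. -/
def IsPCSPOn (X : Finset α) (p : PCSPair α) : Prop :=
  Subsplit.Valid p.2 ∧ Subsplit.Nontriv p.2 ∧ Subsplit.Valid p.1 ∧
    Subsplit.clade p.2 ∈ p.1 ∧ Subsplit.clade p.1 ⊆ X ∧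
    (Subsplit.Nontriv p.1 ∨ p.1 = Sym2.mk X (∅ : Finset α))

/-- A PCSP support on taxon set `X'`. -/
def IsPCSPSupport (X' : Finset α) (P : Set (PCSPair α)) : Prop :=
  ∀ p ∈ P, IsPCSPOn X' p

/-- The subsplits of a PCSP support: subsplits occurring in some pair of `P`,
together with the root placeholder `⟨X', ∅⟩`. -/
def subsplitsOfP (X' : Finset α) (P : Set (PCSPair α)) : Set (Subsplit α) :=
  {u | (∃ s, (u, s) ∈ P) ∨ (∃ t, (t, u) ∈ P)} ∪ {Sym2.mk X' (∅ : Finset α)}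

/-- `P(t/W)`: the subsplits `s` with `U(s) = W` and `(t → s) ∈ P`,
together with the trivial subsplit `{W, ∅}`. -/
def pcspSupportAt (P : Set (PCSPair α)) (t : Subsplit α) (W : Finset α) : Set (Subsplit α) :=
  {s | Subsplit.clade s = W ∧ (t, s) ∈ P} ∪ {Sym2.mk W (∅ : Finset α)}

/-- Reachable states `(t/W, t₁/W₁, t₂/W₂)` in the mutual PCSP support construction. -/
inductive ReachState (P₁ P₂ : Set (PCSPair α)) (X₁ X₂ : Finset α) :
    Subsplit α → Finset α → Subsplit α → Finset α → Subsplit α → Finset α → Prop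
  | root : ReachState P₁ P₂ X₁ X₂ (Sym2.mk (X₁ ∪ X₂) (∅ : Finset α)) (X₁ ∪ X₂)
      (Sym2.mk X₁ (∅ : Finset α)) X₁ (Sym2.mk X₂ (∅ : Finset α)) X₂
  | step {t : Subsplit α} {W : Finset α} {t₁ : Subsplit α} {W₁ : Finset α}
      {t₂ : Subsplit α} {W₂ : Finset α} {s₁ s₂ s u₁ u₂ : Subsplit α} {C : Finset α} :
      ReachState P₁ P₂ X₁ X₂ t W t₁ W₁ t₂ W₂ →
      s₁ ∈ pcspSupportAt P₁ t₁ W₁ → s₂ ∈ pcspSupportAt P₂ t₂ W₂ →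
      s ∈ boxTimes s₁ s₂ → Subsplit.Valid s → Subsplit.Nontriv s →
      ((Subsplit.Nontriv s₁ ∧ u₁ = s₁) ∨ (¬ Subsplit.Nontriv s₁ ∧ u₁ = t₁)) →
      ((Subsplit.Nontriv s₂ ∧ u₂ = s₂) ∨ (¬ Subsplit.Nontriv s₂ ∧ u₂ = t₂)) →
      C ∈ s → 2 ≤ C.card →
      ReachState P₁ P₂ X₁ X₂ s C u₁ (C ∩ X₁) u₂ (C ∩ X₂)

/-- The mutual PCSP support `M(P₁, P₂)`. -/
def mutualPCSP (P₁ P₂ : Set (PCSPair α)) (X₁ X₂ : Finset α) : Set (PCSPair α) :=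
  {p | ∃ W t₁ W₁ t₂ W₂ s₁ s₂, ReachState P₁ P₂ X₁ X₂ p.1 W t₁ W₁ t₂ W₂ ∧
    s₁ ∈ pcspSupportAt P₁ t₁ W₁ ∧ s₂ ∈ pcspSupportAt P₂ t₂ W₂ ∧
    p.2 ∈ boxTimes s₁ s₂ ∧ Subsplit.Valid p.2 ∧ Subsplit.Nontriv p.2}

/-- `PathTo M a c`: there is a chain of parent-child pairs of `M` from `a` down to `c`
(possibly empty, when `a = c`). -/
inductive PathTo (M : Set (PCSPair α)) : Subsplit α → Subsplit α → Prop
  | refl (a : Subsplit α) : PathTo M a a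
  | cons {a b c : Subsplit α} : (a, b) ∈ M → PathTo M b c → PathTo M a c

/-- `(t, s)` is a PCSP of the topology `τ` on `X`: `s ∈ τ` and `t` is a member of `τ`
having `U(s)` as a child clade, or the root placeholder `⟨X, ∅⟩` when `U(s) = X`. -/
def IsPCSPOf (X : Finset α) (τ : Finset (Subsplit α)) (t s : Subsplit α) : Prop :=
  s ∈ τ ∧ ((t ∈ τ ∧ Subsplit.clade s ∈ t) ∨
    (Subsplit.clade s = X ∧ t = Sym2.mk X (∅ : Finset α)))

/-- The set of PCSPs of a topology `τ` on `X`. -/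
def pcspSet (X : Finset α) (τ : Finset (Subsplit α)) : Set (PCSPair α) :=
  {p | IsPCSPOf X τ p.1 p.2}

/-- `a` is an ancestor of `s` in `τ`: `a ∈ τ` (or the root placeholder) and `U(s)` is
contained in a child clade of `a`. -/
def IsAncestor (X : Finset α) (τ : Finset (Subsplit α)) (a s : Subsplit α) : Prop :=
  (a ∈ τ ∨ a = Sym2.mk X (∅ : Finset α)) ∧ ∃ C ∈ a, Subsplit.clade s ⊆ C

/-- `d` is a strict descendant of `a`: `U(d)` is contained in a child clade of `a`. -/
def StrictDesc (a d : Subsplit α) : Prop := ∃ C ∈ a, Subsplit.clade d ⊆ C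

/-- `d` is a (valid) descendant of `a`: `d = a`, or `U(d)` is contained in a child clade
of `a`. -/
def Descend (a d : Subsplit α) : Prop := d = a ∨ ∃ C ∈ a, Subsplit.clade d ⊆ C

/-- The parent subsplit of `s` in `τ` (on taxon set `X`): the member of `τ` having `U(s)`
as a child clade if one exists, otherwise the root placeholder `⟨X, ∅⟩`. -/
noncomputable def parentIn (X : Finset α) (τ : Finset (Subsplit α)) (s : Subsplit α) :
    Subsplit α :=
  if h : ∃ t ∈ τ, Subsplit.clade s ∈ t then h.choose else Sym2.mk X (∅ : Finset α)

/-- The finite set of PCSPs of a topology `τ` on `X`. -/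
noncomputable def pcspFinset (X : Finset α) (τ : Finset (Subsplit α)) : Finset (PCSPair α) :=
  τ.image (fun s => (parentIn X τ s, s))

/-- All (valid) subsplits on the taxon set `X`. -/
noncomputable def allSubsplits (X : Finset α) : Finset (Subsplit α) :=
  ((X.powerset ×ˢ X.powerset).image (fun p => Sym2.mk p.1 p.2)).filter (fun s => Subsplit.Valid s)

/-- All nontrivial (valid) subsplits dividing the clade `W`. -/
noncomputable def subsplitsOn (W : Finset α) : Finset (Subsplit α) :=
  (W.powerset.image (fun Y => Sym2.mk Y (W \ Y))).filter (fun s => Subsplit.Nontriv s)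

/-- All nontrivial subsplits whose parent clade is a child clade of `a`. -/
noncomputable def childSubsplits (a : Subsplit α) : Finset (Subsplit α) :=
  Sym2.lift ⟨fun Y Z => subsplitsOn Y ∪ subsplitsOn Z, fun _ _ => Finset.union_comm _ _⟩ a

end Defs

section CCD

variable {α : Type*} [DecidableEq α]

/-- CCD softmax conditional probability `q(s | U(s))`. -/
noncomputable def ccdCond (v : Subsplit α → ℝ) (s : Subsplit α) : ℝ :=
  Real.exp (v s) / ∑ s' ∈ subsplitsOn (Subsplit.clade s), Real.exp (v s')

/-- CCD probability of a topology: `q(τ) = ∏_{s ∈ τ} q(s | U(s))`. -/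
noncomputable def ccdTopProb (v : Subsplit α → ℝ) (τ : Finset (Subsplit α)) : ℝ :=
  ∏ s ∈ τ, ccdCond v s

/-- Unconditional subsplit probability `q(s)`: sum of `q(τ)` over topologies `τ ∈ T`
containing `s`. -/
noncomputable def ccdSubProb (T : Finset (Finset (Subsplit α))) (v : Subsplit α → ℝ)
    (s : Subsplit α) : ℝ :=
  ∑ τ ∈ T.filter (fun τ => s ∈ τ), ccdTopProb v τ

/-- Unconditional clade probability `q(W)`: sum of `q(τ)` over topologies `τ ∈ T` in which
the clade `W` appears (i.e. `W = X` or `W` is a child clade of some subsplit of `τ`). -/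
noncomputable def ccdCladeProb (X : Finset α) (T : Finset (Finset (Subsplit α)))
    (v : Subsplit α → ℝ) (W : Finset α) : ℝ :=
  ∑ τ ∈ T.filter (fun τ => W = X ∨ ∃ s ∈ τ, W ∈ s), ccdTopProb v τ

/-- Fuel-based recursion computing the CCD conditional path probability. -/
noncomputable def ccdPathAux (v : Subsplit α → ℝ) : ℕ → Subsplit α → Subsplit α → ℝ
  | 0, a, d => if d = a then 1 else 0
  | n + 1, a, d => if d = a then 1 else
      ∑ s'' ∈ childSubsplits a, ccdCond v s'' * ccdPathAux v n s'' d

/-- CCD conditional path probability `q(a →* d | a)`: the sum over all descending chains of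
subsplits from `a` to `d` of the product of the conditional probabilities along the chain. -/
noncomputable def ccdPath (v : Subsplit α → ℝ) (a d : Subsplit α) : ℝ :=
  ccdPathAux v ((Subsplit.clade a).card + 1) a d

/-- CCD conditional path probability starting from a clade:
`q(W →* d | W) = Σ_{s'' : U(s'') = W} q(s'' | U(s'')) q(s'' →* d | s'')`. -/
noncomputable def ccdPathFromClade (v : Subsplit α → ℝ) (W : Finset α) (d : Subsplit α) : ℝ :=
  ∑ s'' ∈ subsplitsOn W, ccdCond v s'' * ccdPath v s'' d

end CCD

section SCD

variable {α : Type*} [DecidableEq α]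

/-- SCD softmax conditional probability `q(s | t)`. -/
noncomputable def scdCond (v : PCSPair α → ℝ) (t s : Subsplit α) : ℝ :=
  Real.exp (v (t, s)) / ∑ s'' ∈ subsplitsOn (Subsplit.clade s), Real.exp (v (t, s''))

/-- SCD probability of a topology `τ` on `X`: the product over PCSPs `(t → s)` of `τ` of
`q(s | t)`. -/
noncomputable def scdTopProb (v : PCSPair α → ℝ) (X : Finset α) (τ : Finset (Subsplit α)) : ℝ :=
  ∏ s ∈ τ, scdCond v (parentIn X τ s) s

/-- Unconditional subsplit probability `q(a)` for SCD-parameterized SBNs. -/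
noncomputable def scdSubProb (T : Finset (Finset (Subsplit α))) (v : PCSPair α → ℝ)
    (X : Finset α) (a : Subsplit α) : ℝ :=
  ∑ τ ∈ T.filter (fun τ => a ∈ τ), scdTopProb v X τ

/-- Fuel-based recursion computing the SCD conditional path probability. -/
noncomputable def scdPathAux (v : PCSPair α → ℝ) : ℕ → Subsplit α → Subsplit α → ℝ
  | 0, a, d => if d = a then 1 else 0
  | n + 1, a, d => if d = a then 1 else
      ∑ s'' ∈ childSubsplits a, scdCond v a s'' * scdPathAux v n s'' d

/-- SCD conditional path probability `q(a →* d | a)`. -/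
noncomputable def scdPath (v : PCSPair α → ℝ) (a d : Subsplit α) : ℝ :=
  scdPathAux v ((Subsplit.clade a).card + 1) a d

/-- SCD conditional path probability from a subsplit `t` with designated child clade `W`:
`q(t/W →* d | t/W) = Σ_{s'' : U(s'') = W} q(s'' | t) q(s'' →* d | s'')`. -/
noncomputable def scdPathFrom (v : PCSPair α → ℝ) (t : Subsplit α) (W : Finset α)
    (d : Subsplit α) : ℝ :=
  ∑ s'' ∈ subsplitsOn W, scdCond v t s'' * scdPath v s'' d

/-- Unconditional ancestor-descendant probability `q(a →* d)`: sum of `q(τ)` over topologies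
`τ ∈ T` containing both `a` and `d` with `d` a descendant of `a`. -/
noncomputable def scdPairProb (T : Finset (Finset (Subsplit α))) (v : PCSPair α → ℝ)
    (X : Finset α) (a d : Subsplit α) : ℝ :=
  ∑ τ ∈ T.filter (fun τ => a ∈ τ ∧ d ∈ τ ∧ Descend a d), scdTopProb v X τ

end SCD

section Statements

variable {α : Type*} [DecidableEq α]

theorem Subsplit.restrict_mk (Y Z B : Finset α) :
    Subsplit.restrict s(Y, Z) B = s(Y ∩ B, Z ∩ B) := rfl

theorem clade_eq_and_of_mem_supportAt {S : Set (Subsplit α)} {W : Finset α} {s : Subsplit α}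
    (h : s ∈ supportAt S W) : Subsplit.clade s = W ∧ (¬ Subsplit.Nontriv s ∨ s ∈ S) := by
  rcases h with ⟨hs, hW⟩ | rfl
  · exact ⟨hW, Or.inr hs⟩
  · exact ⟨Finset.union_empty W, Or.inl fun h => Finset.not_nonempty_empty h.2⟩

theorem boxTimes_comm {s₁ s₂ s : Subsplit α} (h : s ∈ boxTimes s₁ s₂) : s ∈ boxTimes s₂ s₁ := by
  obtain ⟨Y₁, Z₁, Y₂, Z₂, rfl, rfl, rfl | rfl⟩ := h
  · exact ⟨Y₂, Z₂, Y₁, Z₁, rfl, rfl, Or.inl (by rw [union_comm Y₂, union_comm Z₂])⟩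
  · exact ⟨Y₂, Z₂, Y₁, Z₁, rfl, rfl,
      Or.inr (by rw [union_comm Y₂, union_comm Z₂, Sym2.eq_swap])⟩

/-- An element of `A ∩ X` lies in `W ∩ X = Y ∪ Z`, hence in `Y`, since `A` misses `Z`. -/
theorem Subsplit.restrict_mk_union {X W Y Z A B : Finset α} (hYZ : Y ∪ Z = W ∩ X)
    (hAB : A ∪ B ⊆ W) (hd : Disjoint (Y ∪ A) (Z ∪ B)) :
    Subsplit.restrict s(Y ∪ A, Z ∪ B) X = s(Y, Z) := by
  simp only [Finset.ext_iff, Finset.subset_iff, Finset.disjoint_left, Finset.mem_union,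
    Finset.mem_inter] at hYZ hAB hd
  rw [Subsplit.restrict_mk]
  congr 1 <;> ext x <;> grind

theorem restrict_eq_of_mem_boxTimes {X W : Finset α} {s₁ s₂ s : Subsplit α}
    (hs : s ∈ boxTimes s₁ s₂) (hval : Subsplit.Valid s)
    (h₁ : Subsplit.clade s₁ = W ∩ X) (h₂ : Subsplit.clade s₂ ⊆ W) :
    Subsplit.restrict s X = s₁ := by
  obtain ⟨Y₁, Z₁, Y₂, Z₂, rfl, rfl, rfl | rfl⟩ := hs
  · exact Subsplit.restrict_mk_union h₁ h₂ hval
  · exact Subsplit.restrict_mk_union h₁ (by rwa [union_comm]) hval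

theorem stmt0_general (X₁ X₂ : Finset α) (S₁ S₂ : Set (Subsplit α))
    (s : Subsplit α) (hs : s ∈ mutualSupport S₁ S₂ X₁ X₂) :
    (¬ Subsplit.Nontriv (Subsplit.restrict s X₁) ∨ Subsplit.restrict s X₁ ∈ S₁) ∧
    (¬ Subsplit.Nontriv (Subsplit.restrict s X₂) ∨ Subsplit.restrict s X₂ ∈ S₂) := by
  obtain ⟨W, s₁, s₂, -, h₁, h₂, hbox, hval, -⟩ := hs
  obtain ⟨hW₁, hS₁⟩ := clade_eq_and_of_mem_supportAt h₁
  obtain ⟨hW₂, hS₂⟩ := clade_eq_and_of_mem_supportAt h₂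
  have hr₁ : Subsplit.restrict s X₁ = s₁ :=
    restrict_eq_of_mem_boxTimes hbox hval hW₁ (hW₂ ▸ Finset.inter_subset_left)
  have hr₂ : Subsplit.restrict s X₂ = s₂ :=
    restrict_eq_of_mem_boxTimes (boxTimes_comm hbox) hval hW₂ (hW₁ ▸ Finset.inter_subset_left)
  rw [hr₁, hr₂]
  exact ⟨hS₁, hS₂⟩

theorem stmt0 (X₁ X₂ : Finset α) (S₁ S₂ : Set (Subsplit α))
    (hS₁ : IsSupport X₁ S₁) (hS₂ : IsSupport X₂ S₂)
    (s : Subsplit α) (hs : s ∈ mutualSupport S₁ S₂ X₁ X₂) :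
    (¬ Subsplit.Nontriv (Subsplit.restrict s X₁) ∨ Subsplit.restrict s X₁ ∈ S₁) ∧
    (¬ Subsplit.Nontriv (Subsplit.restrict s X₂) ∨ Subsplit.restrict s X₂ ∈ S₂) :=
  stmt0_general X₁ X₂ S₁ S₂ s hs

end Statements
end

section
/- Let S₁, S₂ be subsplit supports on X₁, X₂ with X = X₁ ∪ X₂. If there exists a rooted binary tree topology τ on X such that τ|X₁ ⊆ S₁ and τ|X₂ ⊆ S₂, then τ ⊆ M(S₁, S₂), i.e. every subsplit of τ belongs to the mutual subsplit support. -/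
open Finset

attribute [local instance] Classical.propDecidable

/-! Restricting a subsplit `s ∈ τ` to `X₁` and `X₂` yields members of `S₁(U(s) ∩ X₁)` and
`S₂(U(s) ∩ X₂)`, a trivial restriction being exactly the added trivial subsplit, and `s` is
their ⊠-combination. Walking down `τ` from the root, every parent clade of `τ` is therefore
reachable, and every subsplit of `τ` lies in `M(S₁, S₂)`. -/

section Lemmas

variable {α : Type*}

namespace Subsplit

@[simp] lemma valid_mk (Y Z : Finset α) : Valid s(Y, Z) ↔ Disjoint Y Z := Iff.rfl

@[simp] lemma nontriv_mk (Y Z : Finset α) : Nontriv s(Y, Z) ↔ Y.Nonempty ∧ Z.Nonempty := Iff.rfl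

variable [DecidableEq α]

@[simp] lemma clade_mk (Y Z : Finset α) : clade s(Y, Z) = Y ∪ Z := rfl

@[simp] lemma restrict_mk_s2 (Y Z B : Finset α) : restrict s(Y, Z) B = s(Y ∩ B, Z ∩ B) := rfl

lemma subset_clade_of_mem {s : Subsplit α} {C : Finset α} (hC : C ∈ s) : C ⊆ clade s := by
  induction s using Sym2.ind with
  | _ Y Z => rcases Sym2.mem_iff.mp hC with rfl | rfl <;> simp

lemma card_lt_card_clade_of_mem {s : Subsplit α} (hv : Valid s) (hn : Nontriv s)
    {C : Finset α} (hC : C ∈ s) : C.card < (clade s).card := by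
  induction s using Sym2.ind with
  | _ Y Z =>
    rw [valid_mk] at hv
    rw [nontriv_mk, ← card_pos, ← card_pos] at hn
    rw [clade_mk, card_union_of_disjoint hv]
    rcases Sym2.mem_iff.mp hC with rfl | rfl <;> omega

lemma two_le_card_clade {s : Subsplit α} (hv : Valid s) (hn : Nontriv s) :
    2 ≤ (clade s).card := by
  induction s using Sym2.ind with
  | _ Y Z =>
    rw [valid_mk] at hv
    rw [nontriv_mk, ← card_pos, ← card_pos] at hn
    rw [clade_mk, card_union_of_disjoint hv]
    omega

/-- A trivial restriction is `{U(s) ∩ B, ∅}`, the trivial member of `S(U(s) ∩ B)`. -/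
lemma restrict_mem_supportAt {S : Set (Subsplit α)} {B : Finset α} {s : Subsplit α}
    (hS : Nontriv (restrict s B) → restrict s B ∈ S) :
    restrict s B ∈ supportAt S (clade s ∩ B) := by
  induction s using Sym2.ind with
  | _ Y Z =>
    by_cases h : Nontriv (restrict s(Y, Z) B)
    · exact Or.inl ⟨hS h, by simp [union_inter_distrib_right]⟩
    · right
      simp only [restrict_mk_s2, nontriv_mk, not_and_or, not_nonempty_iff_eq_empty] at h
      simp only [restrict_mk_s2, clade_mk, union_inter_distrib_right, Set.mem_singleton_iff]
      rcases h with h | h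
      · rw [h, empty_union, Sym2.eq_swap]
      · rw [h, union_empty]

lemma mem_boxTimes_restrict {X₁ X₂ : Finset α} {s : Subsplit α} (hs : clade s ⊆ X₁ ∪ X₂) :
    s ∈ boxTimes (restrict s X₁) (restrict s X₂) := by
  induction s using Sym2.ind with
  | _ Y Z =>
    rw [clade_mk, union_subset_iff] at hs
    refine ⟨Y ∩ X₁, Z ∩ X₁, Y ∩ X₂, Z ∩ X₂, rfl, rfl, Or.inl ?_⟩
    rw [← inter_union_distrib_left, ← inter_union_distrib_left, inter_eq_left.mpr hs.1,
      inter_eq_left.mpr hs.2]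

end Subsplit

namespace IsTopology

variable [DecidableEq α] {W : Finset α} {τ : Finset (Subsplit α)}

/-- Child clades are strictly smaller than their parent clades, so this is an induction on the
gap to the largest clade of `τ`. -/
lemma induction_clade (hτ : IsTopology W τ) {P : Finset α → Prop} (root : P W)
    (step : ∀ t ∈ τ, ∀ C ∈ t, 2 ≤ C.card → P (Subsplit.clade t) → P C) :
    ∀ s ∈ τ, P (Subsplit.clade s) := by
  intro s hs
  induction hn : τ.sup (fun t => (Subsplit.clade t).card) - (Subsplit.clade s).card
    using Nat.strong_induction_on generalizing s with
  | _ n ih =>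
    rcases hτ.parentEx s hs with hW | ⟨t, ht, hst⟩
    · exact hW ▸ root
    · have hlt := Subsplit.card_lt_card_clade_of_mem (hτ.valid t ht) (hτ.nontriv t ht) hst
      have hle : (Subsplit.clade t).card ≤ τ.sup (fun t => (Subsplit.clade t).card) :=
        le_sup (f := fun t => (Subsplit.clade t).card) ht
      exact step t ht _ hst (Subsplit.two_le_card_clade (hτ.valid s hs) (hτ.nontriv s hs))
        (ih _ (by omega) t ht rfl)

lemma clade_subset (hτ : IsTopology W τ) : ∀ s ∈ τ, Subsplit.clade s ⊆ W :=
  hτ.induction_clade (P := (· ⊆ W)) subset_rfl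
    fun _ _ _ hC _ ht => (Subsplit.subset_clade_of_mem hC).trans ht

end IsTopology

variable [DecidableEq α]

lemma restrict_mem_supportAt_of_restrictT {τ : Finset (Subsplit α)} {S : Set (Subsplit α)}
    {B : Finset α} (hr : ∀ u ∈ restrictT τ B, u ∈ S) {s : Subsplit α} (hs : s ∈ τ) :
    Subsplit.restrict s B ∈ supportAt S (Subsplit.clade s ∩ B) :=
  Subsplit.restrict_mem_supportAt fun h => hr _ (mem_filter.mpr ⟨mem_image_of_mem _ hs, h⟩)

lemma IsTopology.reachClade {τ : Finset (Subsplit α)} {X₁ X₂ : Finset α}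
    {S₁ S₂ : Set (Subsplit α)} (hτ : IsTopology (X₁ ∪ X₂) τ)
    (hr₁ : ∀ u ∈ restrictT τ X₁, u ∈ S₁) (hr₂ : ∀ u ∈ restrictT τ X₂, u ∈ S₂) :
    ∀ s ∈ τ, ReachClade S₁ S₂ X₁ X₂ (Subsplit.clade s) :=
  hτ.induction_clade .root fun t ht _ hC hcard hreach =>
    .step hreach (restrict_mem_supportAt_of_restrictT hr₁ ht)
      (restrict_mem_supportAt_of_restrictT hr₂ ht)
      (Subsplit.mem_boxTimes_restrict (hτ.clade_subset t ht)) (hτ.valid t ht) (hτ.nontriv t ht)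
      hC hcard

end Lemmas

section Statements

variable {α : Type*} [DecidableEq α]

theorem stmt2_general (X₁ X₂ : Finset α) (S₁ S₂ : Set (Subsplit α))
    (τ : Finset (Subsplit α)) (hτ : IsTopology (X₁ ∪ X₂) τ)
    (hr₁ : ∀ s ∈ restrictT τ X₁, s ∈ S₁) (hr₂ : ∀ s ∈ restrictT τ X₂, s ∈ S₂) :
    ∀ s ∈ τ, s ∈ mutualSupport S₁ S₂ X₁ X₂ := fun s hs =>
  ⟨Subsplit.clade s, _, _, hτ.reachClade hr₁ hr₂ s hs, restrict_mem_supportAt_of_restrictT hr₁ hs,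
    restrict_mem_supportAt_of_restrictT hr₂ hs,
    Subsplit.mem_boxTimes_restrict (hτ.clade_subset s hs),
    hτ.valid s hs, hτ.nontriv s hs⟩

theorem stmt2 (X₁ X₂ : Finset α) (S₁ S₂ : Set (Subsplit α))
    (hS₁ : IsSupport X₁ S₁) (hS₂ : IsSupport X₂ S₂)
    (τ : Finset (Subsplit α)) (hτ : IsTopology (X₁ ∪ X₂) τ)
    (hr₁ : ∀ s ∈ restrictT τ X₁, s ∈ S₁) (hr₂ : ∀ s ∈ restrictT τ X₂, s ∈ S₂) :
    ∀ s ∈ τ, s ∈ mutualSupport S₁ S₂ X₁ X₂ :=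
  stmt2_general X₁ X₂ S₁ S₂ τ hτ hr₁ hr₂

end Statements
end

section
/- Let P₁, P₂ be PCSP supports on X₁, X₂ with X = X₁ ∪ X₂. For every PCSP (t → s) ∈ M(P₁, P₂) and each i ∈ {1, 2}, there exist a subsplit a_i (possibly the root placeholder ⟨X, ∅⟩), a chain of PCSPs contained in M(P₁, P₂) forming a path a_i →* t → s, and a subsplit u_i of P_i, such that a_i|X_i = u_i and U(s|X_i) is a child clade of u_i. -/
open Finset

attribute [local instance] Classical.propDecidable

/-!
Induction over the reachable states `(t/W, t₁/W₁, t₂/W₂)` shows `Wᵢ = W ∩ Xᵢ` and that `Wᵢ` is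
a child clade of the restriction to `Xᵢ` of some `aᵢ →* t`, this restriction lying in the
subsplits of `Pᵢ`. In a step along a valid `s ∈ s₁ ⊠ s₂`, the restriction of `s` to `Xᵢ` is
`sᵢ`, so a child clade `C` of `s` has `C ∩ Xᵢ ∈ sᵢ`. If `sᵢ` is a subsplit of `Pᵢ`, then `s`
itself serves as `aᵢ`; otherwise `sᵢ = {Wᵢ, ∅}` and `C ∩ Xᵢ` is either `Wᵢ`, where the old
`aᵢ` still works, or empty, where the root placeholder does. The theorem is this invariant
at the state from which `(t → s)` is emitted, since `U(s|Xᵢ) = U(sᵢ) = Wᵢ`.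
-/

theorem Finset.union_inter_eq_left_of_disjoint {α : Type*} [DecidableEq α] {Y Z Y' B : Finset α}
    (hY : Y ⊆ B) (hY' : Y' ∩ B ⊆ Y ∪ Z) (hd : Disjoint Y' Z) : (Y ∪ Y') ∩ B = Y := by
  ext x
  have hYx : x ∈ Y → x ∈ B := @hY x
  have hY'x : x ∈ Y' ∩ B → x ∈ Y ∪ Z := @hY' x
  have hdx : x ∈ Y' → x ∉ Z := fun h => disjoint_left.1 hd h
  simp only [mem_inter, mem_union] at *
  tauto

namespace Subsplit

variable {α : Type*} [DecidableEq α]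

theorem mem_restrict_of_mem {s : Subsplit α} {C : Finset α} (B : Finset α) (h : C ∈ s) :
    C ∩ B ∈ s.restrict B :=
  Sym2.mem_map.2 ⟨C, h, rfl⟩

theorem clade_of_mem_pcspSupportAt {P : Set (PCSPair α)} {t s : Subsplit α} {W : Finset α}
    (h : s ∈ pcspSupportAt P t W) : s.clade = W := by
  rcases h with ⟨hW, -⟩ | rfl
  · exact hW
  · exact Finset.union_empty W

/-- The two members of `s₁ ⊠ s₂` differ only by swapping the child clades of `s₂`. -/
theorem exists_eq_mk_union_of_mem_boxTimes {s₁ s₂ s : Subsplit α} (h : s ∈ boxTimes s₁ s₂) :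
    ∃ Y₁ Z₁ Y₂ Z₂ : Finset α, s₁ = s(Y₁, Z₁) ∧ s₂ = s(Y₂, Z₂) ∧ s = s(Y₁ ∪ Y₂, Z₁ ∪ Z₂) := by
  obtain ⟨Y₁, Z₁, Y₂, Z₂, rfl, rfl, rfl | rfl⟩ := h
  · exact ⟨Y₁, Z₁, Y₂, Z₂, rfl, rfl, rfl⟩
  · exact ⟨Y₁, Z₁, Z₂, Y₂, rfl, Sym2.eq_swap, rfl⟩

theorem mem_boxTimes_comm {s₁ s₂ s : Subsplit α} (h : s ∈ boxTimes s₁ s₂) :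
    s ∈ boxTimes s₂ s₁ := by
  obtain ⟨Y₁, Z₁, Y₂, Z₂, rfl, rfl, rfl⟩ := exists_eq_mk_union_of_mem_boxTimes h
  exact ⟨Y₂, Z₂, Y₁, Z₁, rfl, rfl, Or.inl (by rw [union_comm Y₁, union_comm Z₁])⟩

/-- Validity of `s` puts the taxa of `s₂` lying in `B` on the same side as in `s₁`. -/
theorem restrict_eq_of_mem_boxTimes {s₁ s₂ s : Subsplit α} {B : Finset α}
    (h : s ∈ boxTimes s₁ s₂) (hv : s.Valid) (h₁ : s₁.clade ⊆ B)
    (h₂ : s₂.clade ∩ B ⊆ s₁.clade) : s.restrict B = s₁ := by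
  obtain ⟨Y₁, Z₁, Y₂, Z₂, rfl, rfl, rfl⟩ := exists_eq_mk_union_of_mem_boxTimes h
  simp only [Valid, clade, Sym2.lift_mk, union_subset_iff] at hv h₁ h₂
  rw [disjoint_union_left, disjoint_union_right, disjoint_union_right] at hv
  have hY₂ : Y₂ ∩ B ⊆ Y₁ ∪ Z₁ := (inter_subset_inter_right subset_union_left).trans h₂
  have hZ₂ : Z₂ ∩ B ⊆ Z₁ ∪ Y₁ :=
    union_comm Y₁ Z₁ ▸ (inter_subset_inter_right subset_union_right).trans h₂
  rw [restrict, Sym2.map_mk, union_inter_eq_left_of_disjoint h₁.1 hY₂ hv.2.1,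
    union_inter_eq_left_of_disjoint h₁.2 hZ₂ hv.1.2.symm]

end Subsplit

theorem PathTo.snoc {α : Type*} {M : Set (PCSPair α)} {a b c : Subsplit α} (h : PathTo M a b)
    (hbc : (b, c) ∈ M) : PathTo M a c := by
  induction h with
  | refl => exact .cons hbc (.refl c)
  | cons hab _ ih => exact .cons hab (ih hbc)

section Anchored

variable {α : Type*} [DecidableEq α]

/-- One side of the conclusion of the theorem: the subsplits `aᵢ` and `uᵢ` of the paper. -/
def Anchored (M P : Set (PCSPair α)) (X' : Finset α) (t : Subsplit α) (W : Finset α) : Prop :=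
  ∃ a u : Subsplit α, PathTo M a t ∧ u ∈ subsplitsOfP X' P ∧ Subsplit.restrict a X' = u ∧ W ∈ u

variable {M P : Set (PCSPair α)} {X' R : Finset α} {t s : Subsplit α} {W : Finset α}

theorem Anchored.of_pathTo_root (hX' : X' ⊆ R) (hroot : PathTo M s(R, ∅) t)
    (hW : W ∈ s(X', (∅ : Finset α))) : Anchored M P X' t W :=
  ⟨s(R, ∅), s(X', ∅), hroot, Or.inr rfl,
    by rw [Subsplit.restrict, Sym2.map_mk, inter_eq_right.2 hX', empty_inter], hW⟩

theorem Anchored.snoc (h : Anchored M P X' t W) (hts : (t, s) ∈ M) : Anchored M P X' s W := by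
  obtain ⟨a, u, hpath, hu, hau, hW⟩ := h
  exact ⟨a, u, hpath.snoc hts, hu, hau, hW⟩

theorem Anchored.step {t' s' : Subsplit α} {C : Finset α} (hX' : X' ⊆ R)
    (hroot : PathTo M s(R, ∅) t) (hts : (t, s) ∈ M) (h : Anchored M P X' t W)
    (hs' : s' ∈ pcspSupportAt P t' W) (hres : s.restrict X' = s') (hC : C ∈ s) :
    Anchored M P X' s (C ∩ X') := by
  have hCs' : C ∩ X' ∈ s' := hres ▸ Subsplit.mem_restrict_of_mem X' hC
  rcases hs' with ⟨-, hP⟩ | rfl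
  · exact ⟨s, s', .refl s, Or.inl (Or.inr ⟨t', hP⟩), hres, hCs'⟩
  · rcases Sym2.mem_iff.1 hCs' with hCW | hCe
    · exact hCW ▸ h.snoc hts
    · exact .of_pathTo_root hX' (hroot.snoc hts) (hCe ▸ Sym2.mem_mk_right _ _)

end Anchored

namespace ReachState

variable {α : Type*} [DecidableEq α] {P₁ P₂ : Set (PCSPair α)} {X₁ X₂ : Finset α}
  {t t₁ t₂ s₁ s₂ s : Subsplit α} {W W₁ W₂ : Finset α}

theorem clades_eq (h : ReachState P₁ P₂ X₁ X₂ t W t₁ W₁ t₂ W₂) :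
    W₁ = W ∩ X₁ ∧ W₂ = W ∩ X₂ := by
  cases h with
  | root => exact ⟨union_inter_cancel_left.symm, union_inter_cancel_right.symm⟩
  | step => exact ⟨rfl, rfl⟩

theorem restrict_eq_of_mem_boxTimes (h : ReachState P₁ P₂ X₁ X₂ t W t₁ W₁ t₂ W₂)
    (hs₁ : s₁ ∈ pcspSupportAt P₁ t₁ W₁) (hs₂ : s₂ ∈ pcspSupportAt P₂ t₂ W₂)
    (hs : s ∈ boxTimes s₁ s₂) (hv : s.Valid) :
    s.restrict X₁ = s₁ ∧ s.restrict X₂ = s₂ := by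
  obtain ⟨rfl, rfl⟩ := h.clades_eq
  have hc₁ := Subsplit.clade_of_mem_pcspSupportAt hs₁
  have hc₂ := Subsplit.clade_of_mem_pcspSupportAt hs₂
  constructor
  · refine Subsplit.restrict_eq_of_mem_boxTimes hs hv ?_ ?_ <;> rw [hc₁]
    · exact inter_subset_right
    · rw [hc₂]; exact inter_subset_inter_right inter_subset_left
  · refine Subsplit.restrict_eq_of_mem_boxTimes (Subsplit.mem_boxTimes_comm hs) hv ?_ ?_ <;>
      rw [hc₂]
    · exact inter_subset_right
    · rw [hc₁]; exact inter_subset_inter_right inter_subset_left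

theorem pathTo_root (h : ReachState P₁ P₂ X₁ X₂ t W t₁ W₁ t₂ W₂) :
    PathTo (mutualPCSP P₁ P₂ X₁ X₂) s(X₁ ∪ X₂, ∅) t := by
  induction h with
  | root => exact .refl _
  | step hr hs₁ hs₂ hs hv hn _ _ _ _ ih =>
    exact ih.snoc ⟨_, _, _, _, _, _, _, hr, hs₁, hs₂, hs, hv, hn⟩

theorem anchored (h : ReachState P₁ P₂ X₁ X₂ t W t₁ W₁ t₂ W₂) :
    Anchored (mutualPCSP P₁ P₂ X₁ X₂) P₁ X₁ t W₁ ∧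
      Anchored (mutualPCSP P₁ P₂ X₁ X₂) P₂ X₂ t W₂ := by
  induction h with
  | root =>
    exact ⟨.of_pathTo_root subset_union_left (.refl _) (Sym2.mem_mk_left _ _),
      .of_pathTo_root subset_union_right (.refl _) (Sym2.mem_mk_left _ _)⟩
  | @step t _ _ _ _ _ _ _ s _ _ _ hr hs₁ hs₂ hs hv hn _ _ hC _ ih =>
    have hts : (t, s) ∈ mutualPCSP P₁ P₂ X₁ X₂ := ⟨_, _, _, _, _, _, _, hr, hs₁, hs₂, hs, hv, hn⟩
    obtain ⟨hres₁, hres₂⟩ := hr.restrict_eq_of_mem_boxTimes hs₁ hs₂ hs hv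
    exact ⟨ih.1.step subset_union_left hr.pathTo_root hts hs₁ hres₁ hC,
      ih.2.step subset_union_right hr.pathTo_root hts hs₂ hres₂ hC⟩

end ReachState

section Statements

variable {α : Type*} [DecidableEq α]

theorem stmt3_general (X₁ X₂ : Finset α) (P₁ P₂ : Set (PCSPair α))
    (t s : Subsplit α) (h : (t, s) ∈ mutualPCSP P₁ P₂ X₁ X₂) :
    (∃ a₁ u₁ : Subsplit α, PathTo (mutualPCSP P₁ P₂ X₁ X₂) a₁ t ∧
      u₁ ∈ subsplitsOfP X₁ P₁ ∧ Subsplit.restrict a₁ X₁ = u₁ ∧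
      Subsplit.clade (Subsplit.restrict s X₁) ∈ u₁) ∧
    (∃ a₂ u₂ : Subsplit α, PathTo (mutualPCSP P₁ P₂ X₁ X₂) a₂ t ∧
      u₂ ∈ subsplitsOfP X₂ P₂ ∧ Subsplit.restrict a₂ X₂ = u₂ ∧
      Subsplit.clade (Subsplit.restrict s X₂) ∈ u₂) := by
  obtain ⟨W, t₁, W₁, t₂, W₂, s₁, s₂, hr, hs₁, hs₂, hs, hv, -⟩ := h
  obtain ⟨hres₁, hres₂⟩ := hr.restrict_eq_of_mem_boxTimes hs₁ hs₂ hs hv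
  obtain ⟨hanc₁, hanc₂⟩ := hr.anchored
  rw [hres₁, hres₂, Subsplit.clade_of_mem_pcspSupportAt hs₁,
    Subsplit.clade_of_mem_pcspSupportAt hs₂]
  exact ⟨hanc₁, hanc₂⟩

theorem stmt3 (X₁ X₂ : Finset α) (P₁ P₂ : Set (PCSPair α))
    (hP₁ : IsPCSPSupport X₁ P₁) (hP₂ : IsPCSPSupport X₂ P₂)
    (t s : Subsplit α) (h : (t, s) ∈ mutualPCSP P₁ P₂ X₁ X₂) :
    (∃ a₁ u₁ : Subsplit α, PathTo (mutualPCSP P₁ P₂ X₁ X₂) a₁ t ∧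
      u₁ ∈ subsplitsOfP X₁ P₁ ∧ Subsplit.restrict a₁ X₁ = u₁ ∧
      Subsplit.clade (Subsplit.restrict s X₁) ∈ u₁) ∧
    (∃ a₂ u₂ : Subsplit α, PathTo (mutualPCSP P₁ P₂ X₁ X₂) a₂ t ∧
      u₂ ∈ subsplitsOfP X₂ P₂ ∧ Subsplit.restrict a₂ X₂ = u₂ ∧
      Subsplit.clade (Subsplit.restrict s X₂) ∈ u₂) :=
  stmt3_general X₁ X₂ P₁ P₂ t s h

end Statements
end
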